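/- For x > 2 let y(x) = (x² − 4)^{−1/2}, and for sufficiently differentiable f on (2, ∞) define (Df)(x) = (4(x² − 4)/x)·f′(x) + 4·f(x) and (Ef)(x) = ((x² − 4)²/x)·f‴(x) + 8(x² − 4)·f″(x) + ((14x² − 24)/x)·f′(x) + 4·f(x). Set p₀(Y) = −Y ∈ ℝ[Y]. Then there is a unique sequence of polynomials (p_g)_{g≥1} in ℝ[Y] such that for every g ≥ 1: (a) p_g is an ℝ-linear combination of the odd monomials Y³, Y⁵, …, Y^{2g+1}, and (b) D(p_g ∘ y) = E(p_{g−1} ∘ y) as functions on (2, ∞). Moreover p₁(Y) = (1/2)·Y³. (This is the paper's statement that the genus-g one-point series W₁^g of Θ-Gromov–Witten invariants of P¹ is a polynomial of degree 2g+1 in y, determined by the recursion D W₁^g = E W₁^{g−1} from W₁⁰ = −y.) -/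

import Mathlib

open Polynomial

/-- The operator `D = (4/(x·y²))·d/dx + 4 = (4(x²−4)/x)·d/dx + 4`. -/
noncomputable def thetaDop (f : ℝ → ℝ) (x : ℝ) : ℝ :=
  (4 * (x ^ 2 - 4) / x) * deriv f x + 4 * f x

/-- The operator
`E = (1/(x·y⁴))·d³/dx³ + (8/y²)·d²/dx² + ((14x² − 24)/x)·d/dx + 4`. -/
noncomputable def thetaEop (f : ℝ → ℝ) (x : ℝ) : ℝ :=
  ((x ^ 2 - 4) ^ 2 / x) * iteratedDeriv 3 f x + 8 * (x ^ 2 - 4) * iteratedDeriv 2 f x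
    + ((14 * x ^ 2 - 24) / x) * deriv f x + 4 * f x

/-- `y(x) = (x² − 4)^{−1/2}` on `(2, ∞)`. -/
noncomputable def thetaY (x : ℝ) : ℝ := (x ^ 2 - 4) ^ (-(1 / 2 : ℝ))

/-- The predicate on a sequence `(p_g)` of real polynomials: `p₀(Y) = −Y`, each
`p_g` for `g ≥ 1` is an ℝ-linear combination of the odd monomials
`Y³, Y⁵, …, Y^{2g+1}`, and `D(p_g ∘ y) = E(p_{g−1} ∘ y)` on `(2, ∞)`. -/
def thetaOnePointSeq (p : ℕ → Polynomial ℝ) : Prop :=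
  p 0 = -Polynomial.X ∧
  ∀ g : ℕ, 1 ≤ g →
    (∃ c : ℕ → ℝ, p g = ∑ j ∈ Finset.Icc 1 g, Polynomial.C (c j) * Polynomial.X ^ (2 * j + 1)) ∧
    ∀ x : ℝ, 2 < x →
      thetaDop (fun t => (p g).eval (thetaY t)) x
        = thetaEop (fun t => (p (g - 1)).eval (thetaY t)) x

/-!
Write `θ = Y d/dY` for the Euler operator, which multiplies `Yⁿ` by `n`. Since `y' = -x y³` and
`x² - 4 = y⁻²`, the chain rule turns `D` and `E`, applied to `q ∘ y`, into the polynomial operators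
`4 (1 - θ)` and `-(θ - 1) (θ - 2)² - 4 Y² θ² (θ - 2)` applied to `q`. On coefficients the
recursion reads `4 (1 - n) aₙ = -(n - 1) (n - 2)² bₙ - 4 (n - 2)² (n - 4) bₙ₋₂`. Its right side
vanishes at `n = 1` and `4 (1 - n) ≠ 0` for `n ≠ 1`, so it determines `p_g` from `p_{g-1}` among
polynomials without a linear term and raises the top odd degree by two. As `y` takes every
positive value, the identity of functions is equivalent to the identity of polynomials.
-/
namespace Polynomial

section scaleCoeff

variable {R : Type*} [Semiring R]

noncomputable def scaleCoeff (w : ℕ → R) (q : R[X]) : R[X] :=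
  q.sum fun n a => monomial n (w n * a)

@[simp]
theorem coeff_scaleCoeff (w : ℕ → R) (q : R[X]) (n : ℕ) :
    (scaleCoeff w q).coeff n = w n * q.coeff n := by
  rw [scaleCoeff, coeff_sum, Polynomial.sum_def, Finset.sum_eq_single n]
  · simp
  · intro k _ hk; simp [coeff_monomial, hk]
  · intro hn; simp [notMem_support_iff.mp hn]

theorem support_scaleCoeff_subset (w : ℕ → R) (q : R[X]) :
    (scaleCoeff w q).support ⊆ q.support := by
  intro n hn
  rw [mem_support_iff, coeff_scaleCoeff] at hn
  exact mem_support_iff.mpr (right_ne_zero_of_mul hn)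

theorem scaleCoeff_X_pow_mul (w : ℕ → R) (k : ℕ) (q : R[X]) :
    scaleCoeff w (X ^ k * q) = X ^ k * scaleCoeff (fun n => w (n + k)) q := by
  ext n
  simp only [coeff_scaleCoeff, coeff_X_pow_mul']
  split_ifs with h
  · rw [Nat.sub_add_cancel h]
  · rw [mul_zero]

theorem scaleCoeff_scaleCoeff (w v : ℕ → R) (q : R[X]) :
    scaleCoeff w (scaleCoeff v q) = scaleCoeff (fun n => w n * v n) q := by
  ext n
  simp [mul_assoc]

theorem X_mul_derivative (q : R[X]) : X * derivative q = scaleCoeff (fun n => (n : R)) q := by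
  ext n
  cases n with
  | zero => simp
  | succ n => simpa [coeff_derivative] using (Nat.cast_commute (n + 1) (q.coeff (n + 1))).eq.symm

end scaleCoeff

theorem exists_eq_sum_C_mul_X_pow_iff {R ι : Type*} [Semiring R] {s : Finset ι} {f : ι → ℕ}
    (hf : Set.InjOn f s) (q : R[X]) :
    (∃ c : ι → R, q = ∑ i ∈ s, C (c i) * X ^ f i) ↔ ↑q.support ⊆ f '' s := by
  constructor
  · rintro ⟨c, rfl⟩ n hn
    by_contra hns
    refine mem_support_iff.mp hn ?_
    rw [finsetSum_coeff]
    refine Finset.sum_eq_zero fun i hi => ?_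
    rw [coeff_C_mul_X_pow, if_neg]
    rintro rfl
    exact hns ⟨i, hi, rfl⟩
  · intro hq
    refine ⟨fun i => q.coeff (f i), ?_⟩
    ext n
    rw [finsetSum_coeff]
    simp only [coeff_C_mul_X_pow]
    by_cases hn : n ∈ f '' s
    · obtain ⟨i, hi, rfl⟩ := hn
      rw [Finset.sum_eq_single i _ (fun h => absurd hi h), if_pos rfl]
      intro j hj hji
      rw [if_neg fun h => hji (hf hj hi h.symm)]
    · rw [Finset.sum_eq_zero, notMem_support_iff.mp fun h => hn (hq h)]
      rintro i hi
      rw [if_neg]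
      rintro rfl
      exact hn ⟨i, hi, rfl⟩

end Polynomial

section thetaY

variable {x : ℝ}

theorem sq_sub_four_pos (hx : 2 < x) : 0 < x ^ 2 - 4 := by nlinarith

theorem thetaY_pow (hx : 2 < x) (n : ℕ) : thetaY x ^ n = (x ^ 2 - 4) ^ (-(1 / 2 : ℝ) * n) :=
  (Real.rpow_mul_natCast (sq_sub_four_pos hx).le _ n).symm

theorem thetaY_sq (hx : 2 < x) : thetaY x ^ 2 = (x ^ 2 - 4)⁻¹ := by
  rw [thetaY_pow hx, show -(1 / 2 : ℝ) * (2 : ℕ) = -1 by norm_num, Real.rpow_neg_one]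

theorem hasDerivAt_thetaY (hx : 2 < x) : HasDerivAt thetaY (-x * thetaY x ^ 3) x := by
  have h : HasDerivAt thetaY _ x := ((hasDerivAt_pow 2 x).sub_const 4).rpow_const
    (p := -(1 / 2 : ℝ)) (Or.inl (sq_sub_four_pos hx).ne')
  convert h using 1
  rw [thetaY_pow hx, show -(1 / 2 : ℝ) - 1 = -(1 / 2) * (3 : ℕ) by norm_num]
  push_cast
  ring

theorem exists_thetaY_eq {t : ℝ} (ht : 0 < t) : ∃ x, 2 < x ∧ thetaY x = t := by
  have hpos : 0 < 4 + (t ^ 2)⁻¹ := by positivity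
  refine ⟨√(4 + (t ^ 2)⁻¹), ?_, ?_⟩
  · exact (Real.lt_sqrt zero_le_two).2 (by linarith [inv_pos.mpr (pow_pos ht 2)])
  · rw [thetaY, Real.sq_sqrt hpos.le, add_sub_cancel_left, Real.inv_rpow (sq_nonneg t),
      Real.rpow_neg (sq_nonneg t), inv_inv, ← Real.sqrt_eq_rpow, Real.sqrt_sq ht.le]

end thetaY

noncomputable def thetaDeriv (q : ℝ[X]) : ℝ[X] := X ^ 2 * scaleCoeff (fun n => (n : ℝ)) q

section derivatives

variable (q : ℝ[X]) {x : ℝ}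

theorem hasDerivAt_eval_thetaY (hx : 2 < x) :
    HasDerivAt (fun t => q.eval (thetaY t)) (-x * (thetaDeriv q).eval (thetaY x)) x := by
  refine ((q.hasDerivAt (thetaY x)).comp x (hasDerivAt_thetaY hx)).congr_deriv ?_
  simp only [thetaDeriv, ← X_mul_derivative, eval_mul, eval_pow, eval_X]
  ring

theorem deriv_eval_thetaY (hx : 2 < x) :
    deriv (fun t => q.eval (thetaY t)) x = -x * (thetaDeriv q).eval (thetaY x) :=
  (hasDerivAt_eval_thetaY q hx).deriv

theorem iteratedDeriv_two_eval_thetaY (hx : 2 < x) :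
    iteratedDeriv 2 (fun t => q.eval (thetaY t)) x =
      -(thetaDeriv q).eval (thetaY x) + x ^ 2 * (thetaDeriv (thetaDeriv q)).eval (thetaY x) := by
  have h : deriv (fun t => q.eval (thetaY t)) =ᶠ[nhds x]
      fun t => -t * (thetaDeriv q).eval (thetaY t) := by
    filter_upwards [Ioi_mem_nhds hx] with t ht using deriv_eval_thetaY q ht
  have hd : HasDerivAt (fun t => -t * (thetaDeriv q).eval (thetaY t)) _ x :=
    (hasDerivAt_id x).neg.mul (hasDerivAt_eval_thetaY (thetaDeriv q) hx)
  rw [iteratedDeriv_succ, iteratedDeriv_one, h.deriv_eq, hd.deriv, Pi.neg_apply, id]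
  ring

theorem iteratedDeriv_three_eval_thetaY (hx : 2 < x) :
    iteratedDeriv 3 (fun t => q.eval (thetaY t)) x =
      3 * x * (thetaDeriv (thetaDeriv q)).eval (thetaY x)
        - x ^ 3 * (thetaDeriv (thetaDeriv (thetaDeriv q))).eval (thetaY x) := by
  have h : iteratedDeriv 2 (fun t => q.eval (thetaY t)) =ᶠ[nhds x]
      fun t => -(thetaDeriv q).eval (thetaY t)
        + t ^ 2 * (thetaDeriv (thetaDeriv q)).eval (thetaY t) := by
    filter_upwards [Ioi_mem_nhds hx] with t ht using iteratedDeriv_two_eval_thetaY q ht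
  have hd : HasDerivAt (fun t => -(thetaDeriv q).eval (thetaY t)
      + t ^ 2 * (thetaDeriv (thetaDeriv q)).eval (thetaY t)) _ x :=
    (hasDerivAt_eval_thetaY (thetaDeriv q) hx).neg.add
      ((hasDerivAt_pow 2 x).mul (hasDerivAt_eval_thetaY (thetaDeriv (thetaDeriv q)) hx))
  rw [iteratedDeriv_succ, h.deriv_eq, hd.deriv]
  push_cast
  ring

end derivatives

theorem thetaDeriv_thetaDeriv (q : ℝ[X]) :
    thetaDeriv (thetaDeriv q) = X ^ 4 * scaleCoeff (fun n => ((n : ℝ) + 2) * n) q := by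
  simp only [thetaDeriv, scaleCoeff_X_pow_mul, scaleCoeff_scaleCoeff, ← mul_assoc, ← pow_add]
  push_cast
  rfl

theorem thetaDeriv_thetaDeriv_thetaDeriv (q : ℝ[X]) :
    thetaDeriv (thetaDeriv (thetaDeriv q)) =
      X ^ 6 * scaleCoeff (fun n => ((n : ℝ) + 4) * (n + 2) * n) q := by
  simp only [thetaDeriv, scaleCoeff_X_pow_mul, scaleCoeff_scaleCoeff, ← mul_assoc, ← pow_add]
  push_cast
  ring_nf

noncomputable def thetaDpoly (q : ℝ[X]) : ℝ[X] := scaleCoeff (fun n => 4 - 4 * (n : ℝ)) q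

noncomputable def thetaEpoly (q : ℝ[X]) : ℝ[X] :=
  scaleCoeff (fun n => -(((n : ℝ) - 1) * ((n : ℝ) - 2) ^ 2)) q
    + X ^ 2 * scaleCoeff (fun n => -(4 * (n : ℝ) ^ 2 * ((n : ℝ) - 2))) q

section transfer

variable (q : ℝ[X]) {x : ℝ}

theorem thetaDop_eval_thetaY (hx : 2 < x) :
    thetaDop (fun t => q.eval (thetaY t)) x = (thetaDpoly q).eval (thetaY x) := by
  have hD : thetaDpoly q = C 4 * q - C 4 * scaleCoeff (fun n => (n : ℝ)) q := by
    ext n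
    simp only [thetaDpoly, coeff_scaleCoeff, coeff_sub, coeff_C_mul]
    ring
  have hx0 : x ≠ 0 := by positivity
  have hs := (sq_sub_four_pos hx).ne'
  rw [thetaDop, deriv_eval_thetaY q hx, hD]
  simp only [thetaDeriv, eval_mul, eval_sub, eval_C, eval_pow, eval_X]
  rw [thetaY_sq hx]
  field_simp
  ring

theorem thetaEop_eval_thetaY (hx : 2 < x) :
    thetaEop (fun t => q.eval (thetaY t)) x = (thetaEpoly q).eval (thetaY x) := by
  -- `thetaDeriv^[k] q = Y^(2k) (θ + 2k - 2) ⋯ (θ + 2) θ q`: rewrite `thetaEpoly` in these terms.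
  have hE : thetaEpoly q =
      C 4 * q - C 22 * scaleCoeff (fun n => (n : ℝ)) q
        + C 11 * scaleCoeff (fun n => ((n : ℝ) + 2) * n) q
        - scaleCoeff (fun n => ((n : ℝ) + 4) * (n + 2) * n) q
        + X ^ 2 * (C 32 * scaleCoeff (fun n => ((n : ℝ) + 2) * n) q
          - C 32 * scaleCoeff (fun n => (n : ℝ)) q
          - C 4 * scaleCoeff (fun n => ((n : ℝ) + 4) * (n + 2) * n) q) := by
    ext n
    simp only [thetaEpoly, coeff_add, coeff_sub, coeff_C_mul, coeff_scaleCoeff,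
      coeff_X_pow_mul']
    split_ifs with h
    · rw [Nat.cast_sub h]
      push_cast
      ring
    · ring
  have hx0 : x ≠ 0 := by positivity
  have hs := (sq_sub_four_pos hx).ne'
  rw [thetaEop, deriv_eval_thetaY q hx, iteratedDeriv_two_eval_thetaY q hx,
    iteratedDeriv_three_eval_thetaY q hx, thetaDeriv_thetaDeriv_thetaDeriv,
    thetaDeriv_thetaDeriv, hE]
  simp only [thetaDeriv, eval_mul, eval_add, eval_sub, eval_C, eval_pow, eval_X]
  rw [show thetaY x ^ 4 = (thetaY x ^ 2) ^ 2 by ring,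
    show thetaY x ^ 6 = (thetaY x ^ 2) ^ 3 by ring, thetaY_sq hx]
  generalize (scaleCoeff (fun n => (n : ℝ)) q).eval (thetaY x) = u₁
  generalize (scaleCoeff (fun n => ((n : ℝ) + 2) * n) q).eval (thetaY x) = u₂
  generalize (scaleCoeff (fun n => ((n : ℝ) + 4) * (n + 2) * n) q).eval (thetaY x) = u₃
  field_simp
  ring

end transfer

theorem four_sub_four_mul_ne_zero {n : ℕ} (hn : n ≠ 1) : 4 - 4 * (n : ℝ) ≠ 0 := by
  intro h
  exact hn (by exact_mod_cast (by linarith : (n : ℝ) = 1))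

theorem thetaDpoly_injOn {S : Set ℕ} (hS : 1 ∉ S) :
    Set.InjOn thetaDpoly {q | ↑q.support ⊆ S} := by
  intro a ha b hb hab
  ext n
  have h := congrArg (coeff · n) hab
  simp only [thetaDpoly, coeff_scaleCoeff] at h
  by_cases hn : n = 1
  · subst hn
    rw [notMem_support_iff.mp fun h => hS (ha h), notMem_support_iff.mp fun h => hS (hb h)]
  · exact mul_left_cancel₀ (four_sub_four_mul_ne_zero hn) h

theorem thetaDpoly_scaleCoeff_inv {r : ℝ[X]} (hr : r.coeff 1 = 0) :
    thetaDpoly (scaleCoeff (fun n => (4 - 4 * (n : ℝ))⁻¹) r) = r := by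
  ext n
  rw [thetaDpoly, scaleCoeff_scaleCoeff, coeff_scaleCoeff]
  by_cases hn : n = 1
  · simp [hn, hr]
  · rw [mul_inv_cancel₀ (four_sub_four_mul_ne_zero hn), one_mul]

theorem coeff_thetaEpoly_one (q : ℝ[X]) : (thetaEpoly q).coeff 1 = 0 := by
  simp [thetaEpoly, coeff_X_pow_mul']

theorem support_thetaEpoly_subset {q : ℝ[X]} {g : ℕ}
    (hq : ↑q.support ⊆ (fun j => 2 * j + 1) '' Set.Iic g) :
    ↑(thetaEpoly q).support ⊆ (fun j => 2 * j + 1) '' Set.Icc 1 (g + 1) := by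
  intro n hn
  have hn' : (thetaEpoly q).coeff n ≠ 0 := mem_support_iff.mp hn
  by_cases h0 : q.coeff n = 0
  · have hshift : 2 ≤ n ∧ q.coeff (n - 2) ≠ 0 := by
      simp only [thetaEpoly, coeff_add, coeff_scaleCoeff, coeff_X_pow_mul', h0, mul_zero,
        zero_add] at hn'
      split_ifs at hn' with h2
      · exact ⟨h2, right_ne_zero_of_mul hn'⟩
      · exact absurd rfl hn'
    obtain ⟨j, hj, hjn⟩ := hq (mem_support_iff.mpr hshift.2)
    simp only [Set.mem_Iic] at hj
    exact ⟨j + 1, ⟨by omega, by omega⟩, by simp only at hjn ⊢; omega⟩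
  · obtain ⟨j, hj, rfl⟩ := hq (mem_support_iff.mpr h0)
    refine ⟨j, ⟨Nat.one_le_iff_ne_zero.mpr ?_, by simp only [Set.mem_Iic] at hj; omega⟩, rfl⟩
    rintro rfl
    exact hn' (coeff_thetaEpoly_one q)

-- Inverts `thetaDpoly` coefficientwise; at `n = 1` the junk value `0⁻¹ = 0` is harmless because
-- `(thetaEpoly q).coeff 1 = 0`.
noncomputable def thetaSeq : ℕ → ℝ[X]
  | 0 => -X
  | g + 1 => scaleCoeff (fun n => (4 - 4 * (n : ℝ))⁻¹) (thetaEpoly (thetaSeq g))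

theorem thetaDpoly_thetaSeq_succ (g : ℕ) :
    thetaDpoly (thetaSeq (g + 1)) = thetaEpoly (thetaSeq g) :=
  thetaDpoly_scaleCoeff_inv (coeff_thetaEpoly_one _)

theorem support_thetaSeq (g : ℕ) :
    ↑(thetaSeq g).support ⊆ (fun j => 2 * j + 1) '' Set.Iic g := by
  induction g with
  | zero => simp [thetaSeq]
  | succ g ih =>
    exact (Finset.coe_subset.mpr (support_scaleCoeff_subset _ _)).trans
      ((support_thetaEpoly_subset ih).trans (Set.image_mono Set.Icc_subset_Iic_self))

theorem support_thetaSeq_succ (g : ℕ) :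
    ↑(thetaSeq (g + 1)).support ⊆ (fun j => 2 * j + 1) '' Set.Icc 1 (g + 1) :=
  (Finset.coe_subset.mpr (support_scaleCoeff_subset _ _)).trans
    (support_thetaEpoly_subset (support_thetaSeq g))

theorem thetaSeq_one : thetaSeq 1 = C (1 / 2 : ℝ) * X ^ 3 := by
  ext n
  simp only [thetaSeq, thetaEpoly, coeff_scaleCoeff, coeff_add, coeff_neg, coeff_X,
    coeff_X_pow_mul', coeff_C_mul, coeff_X_pow]
  rcases eq_or_ne n 3 with rfl | hn
  · norm_num
  · rw [if_neg hn]
    split_ifs <;> first | omega | (subst_vars; norm_num)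

theorem thetaDpoly_eq_thetaEpoly_of_forall {q r : ℝ[X]}
    (h : ∀ x : ℝ, 2 < x → thetaDop (fun t => q.eval (thetaY t)) x
      = thetaEop (fun t => r.eval (thetaY t)) x) :
    thetaDpoly q = thetaEpoly r := by
  refine eq_of_infinite_eval_eq _ _ ((Set.Ioi_infinite 0).mono fun t ht => ?_)
  obtain ⟨x, hx, rfl⟩ := exists_thetaY_eq ht
  have hx' := h x hx
  rwa [thetaDop_eval_thetaY q hx, thetaEop_eval_thetaY r hx] at hx'

theorem injective_two_mul_add_one : Function.Injective fun j : ℕ => 2 * j + 1 :=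
  fun a b h => by simpa using h

theorem thetaOnePointSeq_thetaSeq : thetaOnePointSeq thetaSeq := by
  refine ⟨rfl, fun g hg => ?_⟩
  obtain ⟨g, rfl⟩ := Nat.exists_eq_add_of_le' hg
  refine ⟨?_, fun x hx => ?_⟩
  · rw [exists_eq_sum_C_mul_X_pow_iff injective_two_mul_add_one.injOn, Finset.coe_Icc]
    exact support_thetaSeq_succ g
  · rw [thetaDop_eval_thetaY _ hx, Nat.add_sub_cancel, thetaEop_eval_thetaY _ hx,
      thetaDpoly_thetaSeq_succ]

theorem eq_thetaSeq_of_thetaOnePointSeq {p : ℕ → ℝ[X]} (hp : thetaOnePointSeq p) :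
    p = thetaSeq := by
  funext g
  induction g with
  | zero => exact hp.1
  | succ g ih =>
    obtain ⟨hsum, heq⟩ := hp.2 (g + 1) g.succ_pos
    rw [exists_eq_sum_C_mul_X_pow_iff injective_two_mul_add_one.injOn, Finset.coe_Icc] at hsum
    have h1 : 1 ∉ (fun j => 2 * j + 1) '' Set.Icc 1 (g + 1) := by
      rintro ⟨j, hj, h⟩
      simp only [Set.mem_Icc] at hj h
      omega
    refine thetaDpoly_injOn h1 hsum (support_thetaSeq_succ g) ?_
    rw [thetaDpoly_eq_thetaEpoly_of_forall heq, Nat.add_sub_cancel, ih, thetaDpoly_thetaSeq_succ]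

/-- there is a unique sequence of polynomials `(p_g)` with
`p₀(Y) = −Y`, each `p_g` (for `g ≥ 1`) an ℝ-linear combination of
`Y³, Y⁵, …, Y^{2g+1}`, satisfying `D(p_g ∘ y) = E(p_{g−1} ∘ y)` on `(2, ∞)`;
moreover `p₁(Y) = (1/2)·Y³`. -/
theorem theta_one_point_recursion_polynomiality :
    (∃! p : ℕ → Polynomial ℝ, thetaOnePointSeq p) ∧
    ∀ p : ℕ → Polynomial ℝ, thetaOnePointSeq p →
      p 1 = Polynomial.C (1 / 2 : ℝ) * Polynomial.X ^ 3 := by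
  refine ⟨⟨thetaSeq, thetaOnePointSeq_thetaSeq, fun p hp => eq_thetaSeq_of_thetaOnePointSeq hp⟩,
    fun p hp => ?_⟩
  rw [eq_thetaSeq_of_thetaOnePointSeq hp, thetaSeq_one]
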